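/- arXiv:2105.11350 — 8 statements merged into one kernel-verified Lean document; each statement's English description precedes it below -/
import Mathlib

section
/- Let p and q be odd primes with p ≡ 1 (mod 4) and q ≡ 1 (mod 4), and let x, y, N be positive integers with N odd such that x² − p·y² = q^N, x odd and y even. Write y = 2^e·y' with y' odd and e ≥ 1. Then e = 1 if and only if q ≡ 5 (mod 8). -/
lemma odd_sq_mod8 (n : ℕ) (h : Odd n) : n ^ 2 % 8 = 1 := by
  obtain ⟨k, rfl⟩ := h
  obtain ⟨j, hj⟩ := Nat.even_mul_succ_self k
  have h2 : (2 * k + 1) ^ 2 = 4 * (k * (k + 1)) + 1 := by ring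
  omega

theorem e_eq_one_iff_q_five_mod_eight
    (p q : ℕ) (hp : p.Prime) (hq : q.Prime) (hpo : Odd p) (hqo : Odd q)
    (hp4 : p % 4 = 1) (hq4 : q % 4 = 1)
    (x y N : ℕ) (hx : 0 < x) (hy : 0 < y) (hN : 0 < N) (hNodd : Odd N)
    (heq : (x : ℤ) ^ 2 - p * y ^ 2 = (q : ℤ) ^ N)
    (hxodd : Odd x) (hyeven : Even y)
    (e y' : ℕ) (he : 1 ≤ e) (hy' : Odd y') (hdecomp : y = 2 ^ e * y') :
    e = 1 ↔ q % 8 = 5 := by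
  -- natural number equation
  have hnat : x ^ 2 = p * y ^ 2 + q ^ N := by
    have : (x : ℤ) ^ 2 = ((p * y ^ 2 + q ^ N : ℕ) : ℤ) := by push_cast; linarith
    exact_mod_cast this
  have hx8 : x ^ 2 % 8 = 1 := odd_sq_mod8 x hxodd
  have hq8 : q % 8 = 1 ∨ q % 8 = 5 := by omega
  -- q^N % 8 = q % 8
  have hqN : q ^ N % 8 = q % 8 := by
    obtain ⟨k, rfl⟩ := hNodd
    have hq2 : q ^ 2 % 8 = 1 := by
      rw [Nat.pow_mod]; rcases hq8 with h | h <;> rw [h] <;> rfl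
    have hpowk : (q ^ 2) ^ k % 8 = 1 := by
      rw [Nat.pow_mod, hq2, one_pow]; rfl
    have hrw : q ^ (2 * k + 1) = (q ^ 2) ^ k * q := by ring
    rw [hrw, Nat.mul_mod, hpowk, one_mul]
    omega
  constructor
  · intro he1
    -- e = 1 : p * y^2 % 8 = 4
    have hyo : Odd (p * y' ^ 2) := hpo.mul (hy'.pow)
    obtain ⟨m, hm⟩ := hyo
    have hpy : p * y ^ 2 = 4 * (p * y' ^ 2) := by
      rw [hdecomp, he1]; ring
    omega
  · intro hq5
    by_contra hne
    have he2 : 2 ≤ e := by omega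
    obtain ⟨f, rfl⟩ : ∃ f, e = f + 2 := ⟨e - 2, by omega⟩
    have hpy : p * y ^ 2 = 8 * (2 * p * (2 ^ f * y') ^ 2) := by
      rw [hdecomp]; ring
    omega
end

section
/- Let p and q be odd primes with p ≡ 1 (mod 4) and q ≡ 1 (mod 4), and let x, y, N be positive integers with N odd such that x² − p·y² = q^N, with x odd and y even. Then (2/q) = (−1)^(y/2), where (2/q) is the Legendre symbol. -/
theorem legendre_two_q_eq_neg_one_pow_half_y
    (p q : ℕ) (hp : p.Prime) (hq : q.Prime) (hpo : Odd p) (hqo : Odd q)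
    (hp4 : p % 4 = 1) (hq4 : q % 4 = 1)
    (x y N : ℕ) (hx : 0 < x) (hy : 0 < y) (hN : 0 < N) (hNodd : Odd N)
    (heq : (x : ℤ) ^ 2 - p * y ^ 2 = (q : ℤ) ^ N)
    (hxodd : Odd x) (hyeven : Even y) :
    jacobiSym 2 q = (-1 : ℤ) ^ (y / 2) := by
  obtain ⟨a, ha⟩ := hxodd
  obtain ⟨m, hm⟩ := hyeven
  obtain ⟨k, hk⟩ := hNodd
  obtain ⟨b, hb⟩ := hqo
  obtain ⟨c, hc⟩ : ∃ c, p = 4 * c + 1 := ⟨p / 4, by omega⟩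
  have hym : y / 2 = m := by omega
  -- reduce the equation mod 8
  have h8 : ((x : ZMod 8))^2 - (p : ZMod 8) * (y : ZMod 8)^2 = (q : ZMod 8)^N := by
    have := congrArg (fun z : ℤ => (z : ZMod 8)) heq
    push_cast at this
    exact this
  rw [ha, hm, hk, hb, hc] at h8
  push_cast at h8
  -- simplify squares of odds mod 8
  have hsq : ∀ z : ZMod 8, (2*z+1)^2 = 1 := by decide
  have hx8 : ((2:ZMod 8)*a+1)^2 = 1 := hsq _
  have hq8 : ((2:ZMod 8)*b+1)^2 = 1 := hsq _
  have hrhs : ((2:ZMod 8)*b+1)^(2*k+1) = 2*b+1 := by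
    rw [pow_succ, pow_mul, hq8, one_pow, one_mul]
  rw [hrhs] at h8
  have h8' : (q : ZMod 8) = 1 - 4 * (m:ZMod 8)^2 := by
    rw [hb]; push_cast
    rw [← h8, hx8]
    ring_nf
    have : (16 : ZMod 8) = 0 := by decide
    linear_combination (-(((m:ZMod 8))^2 * (c:ZMod 8))) * this
  have hval : ∀ r : ℕ, r < 8 → (q : ZMod 8) = (r : ZMod 8) → q % 8 = r := by
    intro r hr h
    have : ((q % 8 : ℕ) : ZMod 8) = ((r : ℕ) : ZMod 8) := by
      rw [ZMod.natCast_mod]; exact h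
    have := congrArg ZMod.val this
    rwa [ZMod.val_natCast_of_lt (by omega), ZMod.val_natCast_of_lt hr] at this
  rcases Nat.even_or_odd m with hme | hmo
  · obtain ⟨d, hd⟩ := hme
    have hq1 : q % 8 = 1 := by
      apply hval 1 (by norm_num)
      rw [h8', hd]; push_cast
      have : ∀ z : ZMod 8, 4 * (z + z)^2 = 0 := by decide
      rw [this]; ring
    rw [jacobiSym.at_two (b := q) (Nat.odd_iff.mpr (by omega)),
      ZMod.χ₈_nat_eq_if_mod_eight, hq1, hym, hd]
    have h2 : q % 2 = 1 := by omega
    simp [h2, pow_add]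
    rw [← pow_add, ← two_mul, pow_mul]; norm_num
  · obtain ⟨d, hd⟩ := hmo
    have hq5 : q % 8 = 5 := by
      apply hval 5 (by norm_num)
      rw [h8', hd]; push_cast
      have : ∀ z : ZMod 8, 4 * (2*z + 1)^2 = 4 := by decide
      rw [this]; decide
    rw [jacobiSym.at_two (b := q) (Nat.odd_iff.mpr (by omega)),
      ZMod.χ₈_nat_eq_if_mod_eight, hq5, hym, hd]
    have h2 : q % 2 = 1 := by omega
    simp [h2, pow_add, pow_mul]
end

section
/- Let p and q be odd primes with p ≡ 1 (mod 4) and q ≡ 3 (mod 4), and let x, y, N be positive integers with N odd such that x² − p·y² = q^N, with x even and y odd. Then the Legendre symbol (2/(pq)) over the odd number pq satisfies (2/(pq)) = (−1)^(x/2). -/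
theorem jacobi_two_pq_eq_neg_one_pow_half_x
    (p q : ℕ) (hp : p.Prime) (hq : q.Prime) (hpo : Odd p) (hqo : Odd q)
    (hp4 : p % 4 = 1) (hq4 : q % 4 = 3)
    (x y N : ℕ) (hx : 0 < x) (hy : 0 < y) (hN : 0 < N) (hNodd : Odd N)
    (heq : (x : ℤ) ^ 2 - p * y ^ 2 = (q : ℤ) ^ N)
    (hxeven : Even x) (hyodd : Odd y) :
    jacobiSym 2 (p * q) = (-1 : ℤ) ^ (x / 2) := by
  have sq1 : ∀ c : ZMod 8, (2 * c + 1) ^ 2 = 1 := by decide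
  obtain ⟨k, hk⟩ := hyodd
  obtain ⟨m, hm⟩ := hNodd
  obtain ⟨n, hn⟩ := hxeven
  obtain ⟨j, hj⟩ := hqo
  have H : ((x : ZMod 8)) ^ 2 - (p : ZMod 8) * (y : ZMod 8) ^ 2 = (q : ZMod 8) ^ N := by
    have := congrArg (fun z : ℤ => (z : ZMod 8)) heq
    push_cast at this
    exact this
  have hy8 : ((y : ZMod 8)) ^ 2 = 1 := by
    have : (y : ZMod 8) = 2 * (k : ZMod 8) + 1 := by rw [hk]; push_cast; ring
    rw [this]; exact sq1 k
  have hq8 : ((q : ZMod 8)) ^ 2 = 1 := by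
    have : (q : ZMod 8) = 2 * (j : ZMod 8) + 1 := by rw [hj]; push_cast; ring
    rw [this]; exact sq1 j
  have hqN : ((q : ZMod 8)) ^ N = (q : ZMod 8) := by
    rw [hm, pow_add, pow_mul, hq8, one_pow, one_mul, pow_one]
  have hx8 : ((x : ZMod 8)) = 2 * (n : ZMod 8) := by rw [hn]; push_cast; ring
  have key : (2 * (n : ZMod 8)) ^ 2 = (p : ZMod 8) + (q : ZMod 8) := by
    rw [← hx8]
    rw [hy8, mul_one, hqN] at H
    linear_combination H
  have hp8 : p % 8 = 1 ∨ p % 8 = 5 := by omega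
  have hq8' : q % 8 = 3 ∨ q % 8 = 7 := by omega
  have hx2 : x / 2 = n := by omega
  rw [hx2]
  have hpqodd : Odd (p * q) := hpo.mul ⟨j, hj⟩
  rw [jacobiSym.at_two hpqodd, ZMod.χ₈_nat_eq_if_mod_eight]
  have hpq2 : ¬ (p * q) % 2 = 0 := by
    have h1 : p % 2 = 1 := Nat.odd_iff.mp hpo
    have h2 : q % 2 = 1 := by omega
    rw [Nat.mul_mod, h1, h2]
    norm_num
  have hmul : (p * q) % 8 = (p % 8) * (q % 8) % 8 := Nat.mul_mod p q 8
  rcases Nat.even_or_odd n with he | ho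
  · obtain ⟨t, ht⟩ := he
    have h0 : ((p : ZMod 8)) + (q : ZMod 8) = 0 := by
      rw [← key, ht]
      push_cast
      have : ∀ c : ZMod 8, (2 * (c + c)) ^ 2 = 0 := by decide
      exact this t
    have : ((p + q : ℕ) : ZMod 8) = 0 := by push_cast; exact h0
    have hd := (ZMod.natCast_eq_zero_iff _ _).mp this
    have hpq8 : (p * q) % 8 = 7 := by
      rcases hp8 with h1 | h1 <;> rcases hq8' with h2 | h2 <;>
        rw [hmul, h1, h2] <;> omega
    rw [Even.neg_one_pow ⟨t, ht⟩]
    simp [hpq2, hpq8]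
  · obtain ⟨t, ht⟩ := ho
    have h4 : ((p : ZMod 8)) + (q : ZMod 8) = ((4 : ℕ) : ZMod 8) := by
      rw [← key, ht]
      push_cast
      have : ∀ c : ZMod 8, (2 * (2 * c + 1)) ^ 2 = 4 := by decide
      exact this t
    have : ((p + q : ℕ) : ZMod 8) = ((4 : ℕ) : ZMod 8) := by push_cast; push_cast at h4; exact h4
    have hd := (ZMod.natCast_eq_natCast_iff' _ _ _).mp this
    have hpq8 : (p * q) % 8 = 3 := by
      rcases hp8 with h1 | h1 <;> rcases hq8' with h2 | h2 <;>
        rw [hmul, h1, h2] <;> omega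
    rw [Odd.neg_one_pow ⟨t, ht⟩]
    simp [hpq2, hpq8]
end

section
/- Let p ≡ 1 (mod 4) and q be odd primes with (p/q) = 1 (Legendre symbol), and let x, y, N be positive integers with N odd and x² − p·y² = q^N, where x is odd. Then the Legendre symbol (x/p) equals the rational biquadratic residue symbol (q/p)₄, i.e., x^((p−1)/2) ≡ q^((p−1)/4) (mod p). -/
theorem legendre_x_p_eq_biquadratic_q_p
    (p q : ℕ) (hp : p.Prime) (hq : q.Prime) (hqo : Odd q)
    (hp4 : p % 4 = 1) (hres : jacobiSym (p : ℤ) q = 1)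
    (x y N : ℕ) (hx : 0 < x) (hy : 0 < y) (hN : 0 < N) (hNodd : Odd N)
    (heq : (x : ℤ) ^ 2 - p * y ^ 2 = (q : ℤ) ^ N)
    (hxodd : Odd x) :
    ((x : ZMod p)) ^ ((p - 1) / 2) = ((q : ZMod p)) ^ ((p - 1) / 4) := by
  haveI : Fact p.Prime := ⟨hp⟩
  haveI : Fact q.Prime := ⟨hq⟩
  have hq2 : q ≠ 2 := by rintro rfl; exact (by norm_num : ¬ Odd 2) hqo
  have hp5 : 5 ≤ p := by
    have := hp.two_le
    omega
  -- Legendre symbol (q/p) = 1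
  have hleg : legendreSym p q = 1 := by
    rw [← legendreSym.quadratic_reciprocity_one_mod_four hp4 hq2,
      jacobiSym.legendreSym.to_jacobiSym]
    exact_mod_cast hres
  have heuler : ((q : ZMod p)) ^ (p / 2) = 1 := by
    have := legendreSym.eq_pow p (q : ℤ)
    rw [hleg] at this; replace this := this.symm
    push_cast at this
    exact this
  set k := (p - 1) / 4 with hk
  have h2k : (p - 1) / 2 = 2 * k := by omega
  have hpk : p / 2 = 2 * k := by omega
  rw [hpk] at heuler
  obtain ⟨m, hm⟩ := hNodd
  -- x^2 = q^N in ZMod p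
  have hx2 : ((x : ZMod p)) ^ 2 = ((q : ZMod p)) ^ N := by
    have : (((x : ℤ) ^ 2 - p * y ^ 2 : ℤ) : ZMod p) = (((q : ℤ) ^ N : ℤ) : ZMod p) := by
      rw [heq]
    push_cast at this
    rwa [ZMod.natCast_self, zero_mul, sub_zero] at this
  calc ((x : ZMod p)) ^ ((p - 1) / 2) = (((x : ZMod p)) ^ 2) ^ k := by
        rw [h2k, pow_mul]
    _ = ((q : ZMod p)) ^ (N * k) := by rw [hx2, ← pow_mul]
    _ = ((q : ZMod p)) ^ k * (((q : ZMod p)) ^ (2 * k)) ^ m := by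
        rw [← pow_mul, ← pow_add]; ring_nf; rw [hm]; ring_nf
    _ = ((q : ZMod p)) ^ k := by rw [heuler, one_pow, mul_one]
end

section
/- Let p ≡ 1 (mod 4) and q ≡ 1 (mod 4) be primes with (p/q) = 1, and let x, y, N be positive integers with N odd such that x² − p·y² = q^N, with x odd and gcd(x, q) = 1. Then the Jacobi symbol (q/x) over the odd number x satisfies (q/x)·(−1)^((x−1)/2) = (q/p)₄, where (q/p)₄ is the rational biquadratic residue symbol, i.e., (q/p)₄ ≡ q^((p−1)/4) (mod p). -/
theorem jacobi_q_x_mul_sign_eq_biquadratic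
    (p q : ℕ) (hp : p.Prime) (hq : q.Prime)
    (hp4 : p % 4 = 1) (hq4 : q % 4 = 1)
    (hres : jacobiSym (p : ℤ) q = 1)
    (x y N : ℕ) (hx : 0 < x) (hy : 0 < y) (hN : 0 < N) (hNodd : Odd N)
    (heq : (x : ℤ) ^ 2 - p * y ^ 2 = (q : ℤ) ^ N)
    (hxodd : Odd x) (hcop : Nat.gcd x q = 1)
    (b : ℤ) (hb : b = 1 ∨ b = -1)
    (hb4 : ((b : ZMod p)) = ((q : ZMod p)) ^ ((p - 1) / 4)) :
    jacobiSym (q : ℤ) x * (-1 : ℤ) ^ ((x - 1) / 2) = b := by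
  haveI : Fact p.Prime := ⟨hp⟩
  haveI : Fact q.Prime := ⟨hq⟩
  have hp5 : 5 ≤ p := by
    rcases hp.two_le.lt_or_eq with h | h
    · omega
    · omega
  haveI : Fact (2 < p) := ⟨by omega⟩
  -- p ≠ q
  have hpq : p ≠ q := by
    intro h
    subst h
    have hdvd : (p : ℤ) ∣ (x : ℤ) ^ 2 := by
      refine ⟨(p : ℤ) ^ (N - 1) + (y : ℤ) ^ 2, ?_⟩
      have hN1 : (p : ℤ) ^ N = p * p ^ (N - 1) := by
        rw [← pow_succ']
        congr 1
        omega
      linarith [heq, hN1]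
    have hpx : (p : ℤ) ∣ (x : ℤ) := (Nat.prime_iff_prime_int.mp hp).dvd_of_dvd_pow hdvd
    have : p ∣ x := Int.ofNat_dvd.mp hpx
    have : p ∣ Nat.gcd x p := Nat.dvd_gcd this dvd_rfl
    rw [hcop] at this
    exact absurd (Nat.le_of_dvd one_pos this) (by omega)
  -- p does not divide x
  have hpx : ¬ p ∣ x := by
    intro h
    have h2 : (p : ℤ) ∣ (x : ℤ) ^ 2 := dvd_pow (Int.ofNat_dvd.mpr h) two_ne_zero
    have h3 : (p : ℤ) ∣ (q : ℤ) ^ N := by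
      have : (q : ℤ) ^ N = (x : ℤ) ^ 2 - p * y ^ 2 := heq.symm
      rw [this]
      exact dvd_sub h2 ⟨(y : ℤ) ^ 2, by ring⟩
    have h4 : (p : ℤ) ∣ (q : ℤ) := (Nat.prime_iff_prime_int.mp hp).dvd_of_dvd_pow h3
    have : p ∣ q := Int.ofNat_dvd.mp h4
    exact hpq ((Nat.prime_dvd_prime_iff_eq hp hq).mp this)
  have hxZ : ((x : ℤ) : ZMod p) ≠ 0 := by
    intro h
    rw [Int.cast_natCast, ZMod.natCast_eq_zero_iff] at h
    exact hpx h
  -- gcd's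
  have hqx : Nat.Coprime x q := hcop
  have hgcdqx : Int.gcd (q : ℤ) x = 1 := by
    simpa [Int.gcd_natCast_natCast] using hqx.symm
  -- nat version of the equation
  have heqN : x ^ 2 = q ^ N + p * y ^ 2 := by
    have : (x : ℤ) ^ 2 = (q : ℤ) ^ N + p * y ^ 2 := by linarith
    exact_mod_cast this
  -- y coprime to x
  have hyx : Nat.Coprime y x := by
    have h1 : Nat.Coprime x (q ^ N) := hqx.pow_right N
    have hd : Nat.gcd y x ∣ q ^ N := by
      have h2 : Nat.gcd y x ∣ x ^ 2 := dvd_pow (Nat.gcd_dvd_right y x) two_ne_zero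
      have h3 : Nat.gcd y x ∣ p * y ^ 2 :=
        Dvd.dvd.mul_left (dvd_pow (Nat.gcd_dvd_left y x) two_ne_zero) p
      have := Nat.dvd_sub h2 h3
      rwa [heqN, Nat.add_sub_cancel] at this
    exact Nat.eq_one_of_dvd_coprimes h1 (Nat.gcd_dvd_right y x) hd
  have hgcdyx : Int.gcd (y : ℤ) x = 1 := by
    simpa [Int.gcd_natCast_natCast] using hyx
  -- Step A : J(p|x) = J(q|x) * (-1)^((x-1)/2)
  have hmodx : ((p : ℤ) * (y : ℤ) ^ 2) % (x : ℕ) = (-(q : ℤ) ^ N) % (x : ℕ) := by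
    have : ((x : ℕ) : ℤ) ∣ (p : ℤ) * (y : ℤ) ^ 2 - (-(q : ℤ) ^ N) := ⟨x, by push_cast; linarith⟩
    exact Int.ModEq.symm (Int.modEq_iff_dvd.mpr this)
  have hA : jacobiSym (p : ℤ) x = jacobiSym (q : ℤ) x * (-1 : ℤ) ^ ((x - 1) / 2) := by
    have h1 : jacobiSym ((p : ℤ) * (y : ℤ) ^ 2) x = jacobiSym (-(q : ℤ) ^ N) x :=
      jacobiSym.mod_left' hmodx
    rw [jacobiSym.mul_left, jacobiSym.sq_one' hgcdyx, mul_one] at h1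
    rw [neg_eq_neg_one_mul, jacobiSym.mul_left, jacobiSym.pow_left] at h1
    have hqx1 : jacobiSym (q : ℤ) x ^ N = jacobiSym (q : ℤ) x := by
      rcases jacobiSym.eq_one_or_neg_one hgcdqx with h | h <;> rw [h]
      · exact one_pow N
      · exact hNodd.neg_one_pow
    have hneg1 : jacobiSym (-1 : ℤ) x = (-1 : ℤ) ^ ((x - 1) / 2) := by
      rw [jacobiSym.at_neg_one hxodd, ZMod.χ₄_eq_neg_one_pow (Nat.odd_iff.mp hxodd)]
      congr 1
      obtain ⟨k, hk⟩ := hxodd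
      omega
    rw [hqx1, hneg1] at h1
    rw [h1]
    ring
  -- Step B : reciprocity
  have hB : jacobiSym (p : ℤ) x = jacobiSym (x : ℤ) p :=
    jacobiSym.quadratic_reciprocity_one_mod_four hp4 hxodd
  -- Step C : Legendre
  have hC : jacobiSym (x : ℤ) p = legendreSym p (x : ℤ) :=
    (jacobiSym.legendreSym.to_jacobiSym p (x : ℤ)).symm
  -- Step D : compute mod p
  have hx2 : ((x : ZMod p)) ^ 2 = ((q : ZMod p)) ^ N := by
    have := congrArg (Int.cast : ℤ → ZMod p) heq
    push_cast at this
    rw [ZMod.natCast_self] at this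
    simpa using this
  have hxne : (x : ZMod p) ≠ 0 := by
    intro h
    rw [ZMod.natCast_eq_zero_iff] at h
    exact hpx h
  have hqleg : ((q : ZMod p)) ^ ((p - 1) / 2) = 1 := by
    set t : ZMod p := (q : ZMod p) ^ ((p - 1) / 2) with ht
    have ht2 : t ^ 2 = 1 := by
      rw [ht, ← pow_mul]
      have : (p - 1) / 2 * 2 = p - 1 := by omega
      rw [this]
      have hqne : (q : ZMod p) ≠ 0 := by
        intro h
        rw [ZMod.natCast_eq_zero_iff] at h
        exact hpq ((Nat.prime_dvd_prime_iff_eq hp hq).mp h)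
      exact ZMod.pow_card_sub_one_eq_one hqne
    have htN : t ^ N = 1 := by
      have h1 : ((x : ZMod p)) ^ (p - 1) = 1 := ZMod.pow_card_sub_one_eq_one hxne
      have h2 : ((x : ZMod p)) ^ (p - 1) = t ^ N := by
        have hh : p - 1 = 2 * ((p - 1) / 2) := by omega
        rw [hh, pow_mul, hx2, ht, ← pow_mul, ← pow_mul, Nat.mul_comm]
      rw [h2] at h1
      exact h1
    rcases sq_eq_one_iff.mp ht2 with h | h
    · exact h
    · exfalso
      rw [h, hNodd.neg_one_pow] at htN
      exact ZMod.neg_one_ne_one htN.symm.symm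
  have hD : ((x : ZMod p)) ^ (p / 2) = (b : ZMod p) := by
    obtain ⟨m, hm⟩ := hNodd
    have he : p / 2 = 2 * ((p - 1) / 4) := by omega
    rw [he, pow_mul, hx2, ← pow_mul, hb4]
    have h42 : (p - 1) / 2 = 2 * ((p - 1) / 4) := by omega
    have : N * ((p - 1) / 4) = (p - 1) / 4 + (p - 1) / 2 * m := by
      subst hm; rw [h42]; ring
    rw [this, pow_add, pow_mul, hqleg, one_pow, mul_one]
  -- conclude
  have hleg : (legendreSym p (x : ℤ) : ZMod p) = (b : ZMod p) := by
    rw [legendreSym.eq_pow]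
    push_cast
    exact hD
  have hlegpm : legendreSym p (x : ℤ) = 1 ∨ legendreSym p (x : ℤ) = -1 :=
    legendreSym.eq_one_or_neg_one p hxZ
  have hfinal : legendreSym p (x : ℤ) = b := by
    rcases hlegpm with h1 | h1 <;> rcases hb with h2 | h2
    · rw [h1, h2]
    · exfalso; rw [h1, h2] at hleg; push_cast at hleg
      exact ZMod.neg_one_ne_one hleg.symm
    · exfalso; rw [h1, h2] at hleg; push_cast at hleg
      exact ZMod.neg_one_ne_one hleg
    · rw [h1, h2]
  rw [← hA, hB, hC]
  exact hfinal
end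

section
/- Let p ≡ 1 (mod 4) and q ≡ 1 (mod 4) be primes with (p/q) = 1, and let x, y, N be positive integers with N odd such that x² − p·y² = q^N, where x is odd and gcd(x,q)=1. Write y = 2^e·y' with y' odd. Then the Jacobi symbol (x/q) equals (p/q)₄·(2/q)^e·(y'/q), and moreover (y'/q) = 1. -/
theorem jacobi_x_q_factorization
    (p q : ℕ) (hp : p.Prime) (hq : q.Prime)
    (hp4 : p % 4 = 1) (hq4 : q % 4 = 1)
    (hres : jacobiSym (p : ℤ) q = 1)
    (x y N : ℕ) (hx : 0 < x) (hy : 0 < y) (hN : 0 < N) (hNodd : Odd N)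
    (heq : (x : ℤ) ^ 2 - p * y ^ 2 = (q : ℤ) ^ N)
    (hxodd : Odd x) (hcop : Nat.gcd x q = 1)
    (e y' : ℕ) (hy' : Odd y') (hdecomp : y = 2 ^ e * y')
    (b : ℤ) (hb : b = 1 ∨ b = -1)
    (hb4 : ((b : ZMod q)) = ((p : ZMod q)) ^ ((q - 1) / 4)) :
    jacobiSym (x : ℤ) q = b * (jacobiSym 2 q) ^ e * jacobiSym (y' : ℤ) q ∧
      jacobiSym (y' : ℤ) q = 1 := by
  haveI : Fact q.Prime := ⟨hq⟩
  have hq2le := hq.two_le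
  have hq5 : 5 ≤ q := by omega
  -- q does not divide x
  have hqx : ¬ q ∣ x := fun h => by
    have h1 : q ∣ 1 := hcop ▸ Nat.dvd_gcd h dvd_rfl
    have := Nat.le_of_dvd one_pos h1
    omega
  -- q does not divide y
  have hqy : ¬ q ∣ y := by
    intro h
    have h1 : (q : ℤ) ∣ (x : ℤ) ^ 2 := by
      have h2 : (x : ℤ) ^ 2 = (q : ℤ) ^ N + p * y ^ 2 := by linarith
      rw [h2]
      exact dvd_add (dvd_pow_self _ hN.ne') (Dvd.dvd.mul_left (dvd_pow (Int.natCast_dvd_natCast.mpr h) two_ne_zero) _)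
    have : q ∣ x := hq.dvd_of_dvd_pow (show q ∣ x ^ 2 by exact_mod_cast h1)
    exact hqx this
  -- gcd x y = 1
  have hxy : Nat.Coprime x y := by
    by_contra hne
    obtain ⟨r, hr, hrd⟩ := Nat.exists_prime_and_dvd (hne : Nat.gcd x y ≠ 1)
    have hrx : r ∣ x := hrd.trans (Nat.gcd_dvd_left _ _)
    have hry : r ∣ y := hrd.trans (Nat.gcd_dvd_right _ _)
    have h1 : (r : ℤ) ∣ (q : ℤ) ^ N := by
      rw [← heq]
      exact dvd_sub (dvd_pow (Int.natCast_dvd_natCast.mpr hrx) two_ne_zero)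
        (Dvd.dvd.mul_left (dvd_pow (Int.natCast_dvd_natCast.mpr hry) two_ne_zero) _)
    have hrq : r ∣ q := hr.dvd_of_dvd_pow (show r ∣ q ^ N by exact_mod_cast h1)
    have : r = q := (Nat.prime_dvd_prime_iff_eq hr hq).mp hrq
    exact hqx (this ▸ hrx)
  have hy'y : y' ∣ y := ⟨2 ^ e, by rw [hdecomp]; ring⟩
  have hxy' : Nat.Coprime x y' := Nat.Coprime.coprime_dvd_right hy'y hxy
  have hqy' : ¬ q ∣ y' := fun h => hqy (h.trans hy'y)
  -- second part : J(y' | q) = 1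
  have part2 : jacobiSym (y' : ℤ) q = 1 := by
    have hrec : jacobiSym (y' : ℤ) q = jacobiSym (q : ℤ) y' :=
      jacobiSym.quadratic_reciprocity_one_mod_four' hy' hq4
    have hgcd : Int.gcd (q : ℤ) y' = 1 := by
      rw [Int.gcd_natCast_natCast]
      exact hq.coprime_iff_not_dvd.mpr hqy'
    have hdvd : ((y' : ℕ) : ℤ) ∣ (x : ℤ) ^ 2 - (q : ℤ) ^ N := by
      have h2 : (x : ℤ) ^ 2 - (q : ℤ) ^ N = p * y ^ 2 := by linarith
      rw [h2]
      exact Dvd.dvd.mul_left (dvd_pow (Int.natCast_dvd_natCast.mpr hy'y) two_ne_zero) _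
    have hmm : (q : ℤ) ^ N % ((y' : ℕ) : ℤ) = (x : ℤ) ^ 2 % ((y' : ℕ) : ℤ) :=
      Int.modEq_iff_dvd.mpr hdvd
    have hpowN : jacobiSym (q : ℤ) y' ^ N = 1 := by
      rw [← jacobiSym.pow_left, jacobiSym.mod_left' hmm]
      exact jacobiSym.sq_one' (by rw [Int.gcd_natCast_natCast]; exact hxy')
    rcases jacobiSym.eq_one_or_neg_one hgcd with h1 | h1
    · rw [hrec, h1]
    · rw [h1, hNodd.neg_one_pow] at hpowN; norm_num at hpowN
  refine ⟨?_, part2⟩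
  -- first part
  have hx0 : ((x : ℤ) : ZMod q) ≠ 0 := by
    rw [Int.cast_natCast, Ne, ZMod.natCast_eq_zero_iff]
    exact hqx
  have hy0 : ((y : ℤ) : ZMod q) ≠ 0 := by
    rw [Int.cast_natCast, Ne, ZMod.natCast_eq_zero_iff]
    exact hqy
  have hsq : ((x : ZMod q)) ^ 2 = (p : ZMod q) * (y : ZMod q) ^ 2 := by
    have h2 := congrArg (fun z : ℤ => (z : ZMod q)) heq
    push_cast at h2
    rw [ZMod.natCast_self, zero_pow hN.ne'] at h2
    linear_combination h2
  have hq2 : q / 2 = 2 * ((q - 1) / 4) := by omega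
  have key : ((legendreSym q x : ℤ) : ZMod q) = ((b * legendreSym q y : ℤ) : ZMod q) := by
    push_cast
    rw [legendreSym.eq_pow, legendreSym.eq_pow, hb4]
    push_cast
    rw [hq2, pow_mul, hsq, mul_pow, ← pow_mul]
  haveI : Fact (2 < q) := ⟨by omega⟩
  have hinj : ∀ u v : ℤ, u = 1 ∨ u = -1 → v = 1 ∨ v = -1 →
      ((u : ZMod q) = (v : ZMod q)) → u = v := by
    rintro u v (rfl | rfl) (rfl | rfl) h <;> push_cast at h <;> first
      | rfl
      | (exfalso; exact ZMod.neg_one_ne_one h.symm)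
      | (exfalso; exact ZMod.neg_one_ne_one h)
  have hlx := legendreSym.eq_one_or_neg_one q (a := x) hx0
  have hly := legendreSym.eq_one_or_neg_one q (a := y) hy0
  have hv : b * legendreSym q y = 1 ∨ b * legendreSym q y = -1 := by
    rcases hb with h3 | h3 <;> rcases hly with h2 | h2 <;> rw [h3, h2] <;> norm_num
  have hleg : legendreSym q x = b * legendreSym q y := hinj _ _ hlx hv key
  have hjy : jacobiSym (y : ℤ) q = jacobiSym 2 q ^ e * jacobiSym (y' : ℤ) q := by
    have h2 : (y : ℤ) = 2 ^ e * (y' : ℤ) := by rw [hdecomp]; push_cast; ring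
    rw [h2, jacobiSym.mul_left, jacobiSym.pow_left]
  rw [← jacobiSym.legendreSym.to_jacobiSym, hleg, jacobiSym.legendreSym.to_jacobiSym, hjy]
  ring
end

section
/- Let p ≡ 1 (mod 4) and q ≡ 1 (mod 4) be primes with (p/q) = 1, and let x, y, N be positive integers with N odd such that x² − p·y² = q^N, with x odd, y even, gcd(x,q)=1, gcd(x,p)=1. Then x + y ≡ 1 (mod 4) if and only if (p/q)₄ = (q/p)₄. -/
lemma pm_cast_inj {n : ℕ} (hn : 3 ≤ n) {a b : ℤ} (ha : a = 1 ∨ a = -1)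
    (hb : b = 1 ∨ b = -1) (h : ((a : ℤ) : ZMod n) = b) : a = b := by
  have key : ¬ ((1 : ZMod n) = -1) := by
    intro h1
    have h2 : ((2 : ℕ) : ZMod n) = 0 := by push_cast; linear_combination h1
    have := (ZMod.natCast_eq_zero_iff 2 n).mp h2
    have := Nat.le_of_dvd (by norm_num) this
    omega
  rcases ha with rfl | rfl <;> rcases hb with rfl | rfl <;> push_cast at h <;> first
    | rfl
    | (exact absurd h key)
    | (exact absurd h.symm key)

lemma pm_pow_odd {z : ℤ} (hz : z = 1 ∨ z = -1) {N : ℕ} (hN : Odd N) : z ^ N = z := by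
  rcases hz with rfl | rfl
  · exact one_pow N
  · exact Odd.neg_one_pow hN

lemma odd_sq_mod_eight {n : ℕ} (hn : Odd n) : n ^ 2 % 8 = 1 := by
  obtain ⟨k, rfl⟩ := hn
  obtain ⟨j, hj⟩ := Nat.even_mul_succ_self k
  have : (2 * k + 1) ^ 2 = 4 * (k * (k + 1)) + 1 := by ring
  omega

theorem x_add_y_one_mod_four_iff_biquadratic_symbols_eq
    (p q : ℕ) (hp : p.Prime) (hq : q.Prime)
    (hp4 : p % 4 = 1) (hq4 : q % 4 = 1)
    (hres : jacobiSym (p : ℤ) q = 1)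
    (x y N : ℕ) (hx : 0 < x) (hy : 0 < y) (hN : 0 < N) (hNodd : Odd N)
    (heq : (x : ℤ) ^ 2 - p * y ^ 2 = (q : ℤ) ^ N)
    (hxodd : Odd x) (hyeven : Even y)
    (hcopq : Nat.gcd x q = 1) (hcopp : Nat.gcd x p = 1)
    (a b : ℤ) (ha : a = 1 ∨ a = -1) (hb : b = 1 ∨ b = -1)
    (ha4 : ((a : ZMod q)) = ((p : ZMod q)) ^ ((q - 1) / 4))
    (hb4 : ((b : ZMod p)) = ((q : ZMod p)) ^ ((p - 1) / 4)) :
    (x + y) % 4 = 1 ↔ a = b := by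
  haveI : Fact p.Prime := ⟨hp⟩
  haveI : Fact q.Prime := ⟨hq⟩
  have hp5 : 5 ≤ p := by
    by_contra h
    push_neg at h
    have := hp.two_le
    interval_cases p <;> simp_all
  have hq5 : 5 ≤ q := by
    by_contra h
    push_neg at h
    have := hq.two_le
    interval_cases q <;> simp_all
  have hpodd : Odd p := hp.odd_of_ne_two (by omega)
  have hqodd : Odd q := hq.odd_of_ne_two (by omega)
  have hnat : x ^ 2 = q ^ N + p * y ^ 2 := by
    have h' : (x : ℤ) ^ 2 = (q : ℤ) ^ N + p * y ^ 2 := by linarith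
    exact_mod_cast h'
  -- gcd(x,y) = 1
  have hxy : Nat.Coprime x y := by
    rw [Nat.coprime_iff_gcd_eq_one]
    by_contra hgcd
    obtain ⟨r, hr, hrd⟩ := Nat.exists_prime_and_dvd hgcd
    have hrx : r ∣ x := hrd.trans (Nat.gcd_dvd_left x y)
    have hry : r ∣ y := hrd.trans (Nat.gcd_dvd_right x y)
    have hrq : r ∣ q ^ N := by
      have h1 : r ∣ x ^ 2 := hrx.trans (dvd_pow_self x (by norm_num))
      have h2 : r ∣ p * y ^ 2 := Dvd.dvd.mul_left (hry.trans (dvd_pow_self y (by norm_num))) p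
      have h3 : q ^ N = x ^ 2 - p * y ^ 2 := by omega
      rw [h3]
      exact Nat.dvd_sub h1 h2
    have : r = q := (Nat.prime_dvd_prime_iff_eq hr hq).mp (hr.dvd_of_dvd_pow hrq)
    subst this
    have : r ∣ Nat.gcd x r := Nat.dvd_gcd hrx dvd_rfl
    rw [hcopq] at this
    exact hr.one_lt.ne' (Nat.eq_one_of_dvd_one this)
  -- q does not divide y
  have hqy : ¬ q ∣ y := by
    intro hdvd
    have h1 : q ∣ x ^ 2 := by
      have hq1 : q ∣ q ^ N := dvd_pow_self q hN.ne'
      have h2 : q ∣ p * y ^ 2 := Dvd.dvd.mul_left (hdvd.trans (dvd_pow_self y (by norm_num))) p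
      rw [hnat]
      exact Nat.dvd_add hq1 h2
    have := hq.dvd_of_dvd_pow h1
    have : q ∣ Nat.gcd x q := Nat.dvd_gcd this dvd_rfl
    rw [hcopq] at this
    exact absurd (Nat.eq_one_of_dvd_one this) hq.one_lt.ne'
  set Jxq : ℤ := jacobiSym (x : ℤ) q with hJxq_def
  set Jyq : ℤ := jacobiSym (y : ℤ) q with hJyq_def
  set Jxp : ℤ := jacobiSym (x : ℤ) p with hJxp_def
  have hJxq1 : Jxq = 1 ∨ Jxq = -1 :=
    jacobiSym.eq_one_or_neg_one (by rw [Int.gcd_natCast_natCast]; exact hcopq)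
  have hJyq1 : Jyq = 1 ∨ Jyq = -1 := by
    refine jacobiSym.eq_one_or_neg_one ?_
    rw [Int.gcd_natCast_natCast]
    exact Nat.Coprime.symm ((Nat.Prime.coprime_iff_not_dvd hq).mpr hqy)
  have hJxp1 : Jxp = 1 ∨ Jxp = -1 :=
    jacobiSym.eq_one_or_neg_one (by rw [Int.gcd_natCast_natCast]; exact hcopp)
  -- a = Jxq * Jyq
  have hA : a = Jxq * Jyq := by
    have hv : ((y : ℕ) : ZMod q) ≠ 0 := by
      rw [Ne, ZMod.natCast_eq_zero_iff]; exact hqy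
    have hmod : ((x : ℕ) : ZMod q) ^ 2 = (p : ZMod q) * ((y : ℕ) : ZMod q) ^ 2 := by
      have h1 := congrArg (fun z : ℤ => (z : ZMod q)) heq
      push_cast at h1
      rw [ZMod.natCast_self, zero_pow hN.ne'] at h1
      linear_combination h1
    have hpeq : ((p : ℕ) : ZMod q) = (((x : ℕ) : ZMod q) * ((y : ℕ) : ZMod q)⁻¹) ^ 2 := by
      field_simp
      linear_combination -hmod
    have hxpow : ((x : ℕ) : ZMod q) ^ (q / 2) = ((Jxq : ℤ) : ZMod q) := by
      rw [hJxq_def, ← jacobiSym.legendreSym.to_jacobiSym, legendreSym.eq_pow]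
      push_cast
      rfl
    have hypow : ((y : ℕ) : ZMod q) ^ (q / 2) = ((Jyq : ℤ) : ZMod q) := by
      rw [hJyq_def, ← jacobiSym.legendreSym.to_jacobiSym, legendreSym.eq_pow]
      push_cast
      rfl
    have hcast : ((a : ℤ) : ZMod q) = ((Jxq * Jyq : ℤ) : ZMod q) := by
      rw [ha4, hpeq, ← pow_mul]
      have he : 2 * ((q - 1) / 4) = q / 2 := by omega
      rw [he, mul_pow, hxpow, inv_pow, hypow]
      rcases hJyq1 with h1 | h1 <;> rw [h1] <;> push_cast <;> norm_num [inv_neg]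
    exact pm_cast_inj (by omega) ha
      (by rcases hJxq1 with h1 | h1 <;> rcases hJyq1 with h2 | h2 <;> rw [h1, h2] <;> norm_num)
      hcast
  -- b = Jxp
  have hB : b = Jxp := by
    have hmod : ((x : ℕ) : ZMod p) ^ 2 = ((q : ℕ) : ZMod p) ^ N := by
      have h1 := congrArg (fun z : ℤ => (z : ZMod p)) heq
      push_cast at h1
      rw [ZMod.natCast_self] at h1
      linear_combination h1
    have hxpow : ((x : ℕ) : ZMod p) ^ (p / 2) = ((Jxp : ℤ) : ZMod p) := by
      rw [hJxp_def, ← jacobiSym.legendreSym.to_jacobiSym, legendreSym.eq_pow]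
      push_cast
      rfl
    have hcast : ((Jxp : ℤ) : ZMod p) = ((b : ℤ) : ZMod p) := by
      have he : p / 2 = 2 * ((p - 1) / 4) := by omega
      calc ((Jxp : ℤ) : ZMod p) = ((x : ℕ) : ZMod p) ^ (p / 2) := hxpow.symm
        _ = (((x : ℕ) : ZMod p) ^ 2) ^ ((p - 1) / 4) := by rw [he, pow_mul]
        _ = (((q : ℕ) : ZMod p) ^ N) ^ ((p - 1) / 4) := by rw [hmod]
        _ = (((q : ℕ) : ZMod p) ^ ((p - 1) / 4)) ^ N := by
              rw [← pow_mul, ← pow_mul, mul_comm]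
        _ = ((b : ℤ) : ZMod p) ^ N := by rw [← hb4]
        _ = (((b : ℤ) ^ N : ℤ) : ZMod p) := by push_cast; ring
        _ = ((b : ℤ) : ZMod p) := by rw [pm_pow_odd hb hNodd]
    exact (pm_cast_inj (by omega) hJxp1 hb hcast).symm
  -- Jxq = χ₄ x * Jxp
  have hC : Jxq = ZMod.χ₄ x * Jxp := by
    have hcopqx : Int.gcd (q : ℤ) (x : ℕ) = 1 := by
      rw [Int.gcd_natCast_natCast]; exact Nat.coprime_comm.mp hcopq
    have h1 : Jxq = jacobiSym (q : ℤ) x := by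
      rw [hJxq_def]
      exact jacobiSym.quadratic_reciprocity_one_mod_four' hxodd hq4
    have hmodx : jacobiSym ((q : ℤ) ^ N) x = jacobiSym (-((p : ℤ) * (y : ℤ) ^ 2)) x := by
      refine jacobiSym.mod_left' ?_
      show ((q : ℤ) ^ N) % (x : ℕ) = (-((p : ℤ) * (y : ℤ) ^ 2)) % (x : ℕ)
      refine Int.ModEq.symm (Int.modEq_iff_dvd.mpr ⟨(x : ℤ), by push_cast; linarith⟩)
    have h2 : jacobiSym (q : ℤ) x ^ N = ZMod.χ₄ x * Jxp := by
      rw [← jacobiSym.pow_left, hmodx, jacobiSym.neg _ hxodd, jacobiSym.mul_left,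
        jacobiSym.sq_one' (by rw [Int.gcd_natCast_natCast]; exact hxy.symm),
        jacobiSym.quadratic_reciprocity_one_mod_four hp4 hxodd, mul_one, hJxp_def]
    rw [h1, ← pm_pow_odd (jacobiSym.eq_one_or_neg_one hcopqx) hNodd, h2]
  -- odd divisors of y have symbol 1
  have hD : ∀ m : ℕ, Odd m → m ∣ y → jacobiSym (m : ℤ) q = 1 := by
    intro m hm hmy
    have hxm : Int.gcd (x : ℤ) (m : ℕ) = 1 := by
      rw [Int.gcd_natCast_natCast]
      exact Nat.Coprime.coprime_dvd_right hmy hxy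
    have h2 : jacobiSym (q : ℤ) m ^ N = 1 := by
      obtain ⟨t, ht⟩ := hmy
      have hmod : jacobiSym ((q : ℤ) ^ N) m = jacobiSym ((x : ℤ) ^ 2) m := by
        refine jacobiSym.mod_left' ?_
        show ((q : ℤ) ^ N) % (m : ℕ) = ((x : ℤ) ^ 2) % (m : ℕ)
        refine Int.modEq_iff_dvd.mpr ⟨(p : ℤ) * m * t ^ 2, ?_⟩
        have : (y : ℤ) = (m : ℤ) * t := by exact_mod_cast congrArg (Nat.cast : ℕ → ℤ) ht
        rw [← heq, this]; ring
      rw [← jacobiSym.pow_left, hmod, jacobiSym.sq_one' hxm]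
    have h3 : jacobiSym (q : ℤ) m = 1 := by
      rcases jacobiSym.trichotomy (q : ℤ) m with h | h | h
      · rw [h, zero_pow hN.ne'] at h2; norm_num at h2
      · exact h
      · rw [h, Odd.neg_one_pow hNodd] at h2; norm_num at h2
    rw [jacobiSym.quadratic_reciprocity_one_mod_four' hm hq4, h3]
  have hqN8 : q ^ N % 8 = q % 8 := by
    have hq28 : q ^ 2 % 8 = 1 := odd_sq_mod_eight hqodd
    obtain ⟨k, hk⟩ := hNodd
    have hqk : q ^ N = (q ^ 2) ^ k * q := by rw [hk]; ring
    rw [hqk, Nat.mul_mod, Nat.pow_mod, hq28, one_pow]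
    omega
  have hy4 : y % 4 = 0 ∨ y % 4 = 2 := by
    obtain ⟨k, rfl⟩ := hyeven; omega
  have hx8 : x ^ 2 % 8 = 1 := odd_sq_mod_eight hxodd
  have hx4 : x % 4 = 1 ∨ x % 4 = 3 := Nat.odd_mod_four_iff.mp (Nat.odd_iff.mp hxodd)
  rcases hy4 with hy4 | hy4
  · -- y ≡ 0 mod 4 : q ≡ 1 mod 8, Jyq = 1
    have hq8 : q % 8 = 1 := by
      have hy8 : p * y ^ 2 % 8 = 0 := by
        obtain ⟨t, ht⟩ : ∃ t, y = 4 * t := ⟨y / 4, by omega⟩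
        have h2 : y ^ 2 = 8 * (2 * t ^ 2) := by rw [ht]; ring
        rw [Nat.mul_mod, h2]
        simp
      omega
    have hYQ : Jyq = 1 := by
      have hy0 : y ≠ 0 := hy.ne'
      have hsplit : 2 ^ (y.factorization 2) * (y / 2 ^ (y.factorization 2)) = y :=
        Nat.ordProj_mul_ordCompl_eq_self y 2
      have hm0odd : Odd (y / 2 ^ (y.factorization 2)) := by
        rcases Nat.even_or_odd (y / 2 ^ (y.factorization 2)) with he | ho
        · exact absurd ((even_iff_two_dvd).mp he) (Nat.not_dvd_ordCompl Nat.prime_two hy0)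
        · exact ho
      have hm0dvd : (y / 2 ^ (y.factorization 2)) ∣ y := Nat.ordCompl_dvd y 2
      have hsplit' : ((y : ℕ) : ℤ) = (2 : ℤ) ^ (y.factorization 2) * ((y / 2 ^ (y.factorization 2) : ℕ) : ℤ) := by
        exact_mod_cast (congrArg (Nat.cast : ℕ → ℤ) hsplit.symm)
      have h2q : jacobiSym (2 : ℤ) q = 1 := by
        rw [jacobiSym.at_two hqodd, ZMod.χ₈_nat_mod_eight, hq8]
        decide
      rw [hJyq_def, hsplit', jacobiSym.mul_left, jacobiSym.pow_left, h2q, one_pow,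
        hD _ hm0odd hm0dvd, one_mul]
    rw [hA, hB, hC, hYQ]
    rcases hx4 with hx4 | hx4
    · rw [ZMod.χ₄_nat_one_mod_four hx4]
      constructor
      · intro _; ring
      · intro _; omega
    · rw [ZMod.χ₄_nat_three_mod_four hx4]
      constructor
      · intro h; omega
      · intro h; exfalso; rcases hJxp1 with h1 | h1 <;> rw [h1] at h <;> norm_num at h
  · -- y ≡ 2 mod 4 : q ≡ 5 mod 8, Jyq = -1
    have hq8 : q % 8 = 5 := by
      have hy8 : p * y ^ 2 % 8 = 4 := by
        obtain ⟨t, ht⟩ : ∃ t, y = 4 * t + 2 := ⟨y / 4, by omega⟩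
        have h2 : y ^ 2 % 8 = 4 := by
          have : y ^ 2 = 8 * (2 * t ^ 2 + 2 * t) + 4 := by rw [ht]; ring
          omega
        have hp2 : p % 2 = 1 := Nat.odd_iff.mp hpodd
        rw [Nat.mul_mod, h2]
        omega
      omega
    have hYQ : Jyq = -1 := by
      have hm : Odd (y / 2) := Nat.odd_iff.mpr (by omega)
      have hsplit : ((y : ℕ) : ℤ) = (2 : ℤ) * ((y / 2 : ℕ) : ℤ) := by
        have : y = 2 * (y / 2) := by omega
        exact_mod_cast congrArg (Nat.cast : ℕ → ℤ) this
      have h2q : jacobiSym (2 : ℤ) q = -1 := by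
        rw [jacobiSym.at_two hqodd, ZMod.χ₈_nat_mod_eight, hq8]
        decide
      rw [hJyq_def, hsplit, jacobiSym.mul_left, h2q,
        hD _ hm ⟨2, by omega⟩, mul_one]
    rw [hA, hB, hC, hYQ]
    rcases hx4 with hx4 | hx4
    · rw [ZMod.χ₄_nat_one_mod_four hx4]
      constructor
      · intro h; omega
      · intro h; exfalso; rcases hJxp1 with h1 | h1 <;> rw [h1] at h <;> norm_num at h
    · rw [ZMod.χ₄_nat_three_mod_four hx4]
      constructor
      · intro _; ring
      · intro _; omega
end

section
/- Let p ≡ 1 (mod 4) and q ≡ 3 (mod 4) be primes with (p/q) = 1, and let x, y, N be positive integers with N odd, x² − p·y² = q^N, x even, y odd, gcd(xy, pq) = 1. If (x/q) = (y/q) (Legendre symbols), then x + y ≡ 1 (mod 4) if and only if (q/p)₄ = 1; and if (x/q) = −(y/q), then x + y ≡ 1 (mod 4) if and only if (q/p)₄ = −1. -/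
lemma sq8 {n : ℕ} (h : n % 2 = 1) : ((n : ZMod 8))^2 = 1 := by
  have h8 : n % 8 = 1 ∨ n % 8 = 3 ∨ n % 8 = 5 ∨ n % 8 = 7 := by omega
  rw [← ZMod.natCast_mod n 8]
  rcases h8 with h8|h8|h8|h8 <;> rw [h8] <;> decide

theorem x_add_y_mod_four_characterization
    (p q : ℕ) (hp : p.Prime) (hq : q.Prime)
    (hp4 : p % 4 = 1) (hq4 : q % 4 = 3)
    (hres : jacobiSym (p : ℤ) q = 1)
    (x y N : ℕ) (hx : 0 < x) (hy : 0 < y) (hN : 0 < N) (hNodd : Odd N)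
    (heq : (x : ℤ) ^ 2 - p * y ^ 2 = (q : ℤ) ^ N)
    (hxeven : Even x) (hyodd : Odd y) (hcop : Nat.gcd (x * y) (p * q) = 1)
    (b : ℤ) (hb : b = 1 ∨ b = -1)
    (hb4 : ((b : ZMod p)) = ((q : ZMod p)) ^ ((p - 1) / 4)) :
    (jacobiSym (x : ℤ) q = jacobiSym (y : ℤ) q → ((x + y) % 4 = 1 ↔ b = 1)) ∧
    (jacobiSym (x : ℤ) q = -jacobiSym (y : ℤ) q → ((x + y) % 4 = 1 ↔ b = -1)) := by
  haveI fp : Fact p.Prime := ⟨hp⟩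
  haveI fq : Fact q.Prime := ⟨hq⟩
  have hp2 := hp.two_le
  have hq2 := hq.two_le
  haveI : Fact (2 < p) := ⟨by omega⟩
  have hpodd : Odd p := Nat.odd_iff.mpr (by omega)
  have hqodd : Odd q := Nat.odd_iff.mpr (by omega)
  have hyodd' : y % 2 = 1 := Nat.odd_iff.mp hyodd
  have hxeven' : x % 2 = 0 := Nat.even_iff.mp hxeven
  -- coprimality facts
  have hco : Nat.Coprime (x*y) (p*q) := hcop
  have cxp : Nat.Coprime x p :=
    Nat.Coprime.coprime_dvd_right (dvd_mul_right p q)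
      (Nat.Coprime.coprime_dvd_left (dvd_mul_right x y) hco)
  have cxq : Nat.Coprime x q :=
    Nat.Coprime.coprime_dvd_right (dvd_mul_left q p)
      (Nat.Coprime.coprime_dvd_left (dvd_mul_right x y) hco)
  have cyq : Nat.Coprime y q :=
    Nat.Coprime.coprime_dvd_right (dvd_mul_left q p)
      (Nat.Coprime.coprime_dvd_left (dvd_mul_left y x) hco)
  have cxy : Nat.Coprime x y := by
    have hd : (Nat.gcd x y : ℤ) ∣ (q:ℤ)^N := by
      rw [← heq]
      exact dvd_sub
        (dvd_pow (Int.natCast_dvd_natCast.mpr (Nat.gcd_dvd_left x y)) two_ne_zero)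
        (Dvd.dvd.mul_left
          (dvd_pow (Int.natCast_dvd_natCast.mpr (Nat.gcd_dvd_right x y)) two_ne_zero) _)
    have hd' : Nat.gcd x y ∣ q^N := by exact_mod_cast hd
    exact Nat.Coprime.eq_one_of_dvd
      ((Nat.Coprime.coprime_dvd_left (Nat.gcd_dvd_left x y) cxq).pow_right N) hd'
  -- Step 1 : b = J(x | p)
  have hxp : jacobiSym (x:ℤ) p = b := by
    have hzp : ((x:ZMod p))^2 = ((q:ZMod p))^N := by
      have h := congrArg (Int.cast : ℤ → ZMod p) heq
      push_cast at h
      rwa [ZMod.natCast_self, zero_mul, sub_zero] at h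
    have hbN : b ^ N = b := by
      rcases hb with rfl|rfl
      · simp
      · exact Odd.neg_one_pow hNodd
    have hpow : ((x:ZMod p))^(p/2) = (b : ZMod p) := by
      have h2 : p / 2 = 2 * ((p-1)/4) := by omega
      rw [h2, pow_mul, hzp, ← pow_mul, mul_comm N ((p-1)/4), pow_mul, ← hb4,
        ← Int.cast_pow, hbN]
    have hleg : ((legendreSym p (x:ℤ) : ℤ) : ZMod p) = ((b : ℤ) : ZMod p) := by
      rw [legendreSym.eq_pow]
      exact_mod_cast hpow
    have hxz : ((x:ℤ) : ZMod p) ≠ 0 := by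
      intro h0
      have : p ∣ x := by exact_mod_cast (ZMod.intCast_zmod_eq_zero_iff_dvd (x:ℤ) p).mp h0
      have := Nat.Coprime.eq_one_of_dvd cxp.symm this
      omega
    have htri := legendreSym.eq_one_or_neg_one (p := p) (a := (x:ℤ)) hxz
    rw [← jacobiSym.legendreSym.to_jacobiSym]
    rcases htri with h|h <;> rcases hb with rfl|rfl <;> rw [h] at hleg ⊢ <;>
      simp only [Int.cast_one, Int.cast_neg] at hleg <;>
      first
        | rfl
        | (exfalso; exact ZMod.neg_one_ne_one hleg.symm)
        | (exfalso; exact ZMod.neg_one_ne_one hleg)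
  -- Step 2 : J(q | y) = 1, hence J(y | q) is determined by y mod 4
  have hqy1 : jacobiSym (q:ℤ) y = 1 := by
    have hmod : ((q:ℤ)^N) % (y:ℤ) = ((x:ℤ)^2) % (y:ℤ) :=
      Int.modEq_iff_dvd.mpr (by rw [← heq]; exact ⟨(p:ℤ)*y, by ring⟩)
    have h1 := jacobiSym.mod_left' hmod
    rw [jacobiSym.pow_left, jacobiSym.sq_one' (by rw [Int.gcd_natCast_natCast]; exact cxy)] at h1
    rcases jacobiSym.eq_one_or_neg_one (a := (q:ℤ)) (b := y)
        (by rw [Int.gcd_natCast_natCast]; exact cyq.symm) with h|h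
    · exact h
    · rw [h, Odd.neg_one_pow hNodd] at h1; norm_num at h1
  have hyq1 : y % 4 = 1 → jacobiSym (y:ℤ) q = 1 := fun h => by
    rw [jacobiSym.quadratic_reciprocity_one_mod_four h hqodd, hqy1]
  have hyq3 : y % 4 = 3 → jacobiSym (y:ℤ) q = -1 := fun h => by
    rw [jacobiSym.quadratic_reciprocity_three_mod_four h hq4, hqy1]
  -- Step 3 : J(x|p) * J(x|q) = (J(2|p) * J(2|q)) ^ s  where x = 2^s * u
  set s := x.factorization 2 with hs
  set u := x / 2^s with hu
  have hxu : x = 2^s * u := (Nat.ordProj_mul_ordCompl_eq_self x 2).symm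
  have hu2 : ¬ 2 ∣ u := Nat.not_dvd_ordCompl Nat.prime_two hx.ne'
  have hu_odd : Odd u := Nat.odd_iff.mpr (by omega)
  have hux : u ∣ x := Nat.ordCompl_dvd x 2
  have hs1 : 1 ≤ s :=
    Nat.Prime.factorization_pos_of_dvd Nat.prime_two hx.ne' hxeven.two_dvd
  have hu0 : 0 < u := Nat.pos_of_ne_zero (fun h0 => hu2 (h0 ▸ dvd_zero 2))
  have hprod : (jacobiSym (x:ℤ) p) * (jacobiSym (x:ℤ) q)
      = (jacobiSym 2 p * jacobiSym 2 q) ^ s := by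
    have cup : Nat.Coprime u p := Nat.Coprime.coprime_dvd_left hux cxp
    have cuy : Nat.Coprime u y := Nat.Coprime.coprime_dvd_left hux cxy
    have hqu : jacobiSym (q:ℤ) u = ZMod.χ₄ u * jacobiSym (p:ℤ) u := by
      have hdvd : (u:ℤ) ∣ (x:ℤ)^2 :=
        dvd_pow (Int.natCast_dvd_natCast.mpr hux) two_ne_zero
      have hmod : ((q:ℤ)^N) % (u:ℤ) = (-1 * ((p:ℤ) * (y:ℤ)^2)) % (u:ℤ) :=
        Int.modEq_iff_dvd.mpr (by
          have h2 : -1 * ((p:ℤ) * (y:ℤ)^2) - (q:ℤ)^N = -((x:ℤ)^2) := by rw [← heq]; ring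
          rw [h2]; exact dvd_neg.mpr hdvd)
      have h1 := jacobiSym.mod_left' hmod
      rw [jacobiSym.pow_left, jacobiSym.mul_left, jacobiSym.mul_left,
        jacobiSym.sq_one' (by rw [Int.gcd_natCast_natCast]; exact cuy.symm),
        jacobiSym.at_neg_one hu_odd, mul_one] at h1
      rcases jacobiSym.eq_one_or_neg_one (a := (q:ℤ)) (b := u)
          (by rw [Int.gcd_natCast_natCast]; exact (Nat.Coprime.coprime_dvd_left hux cxq).symm)
          with h|h
      · rw [h, one_pow] at h1; rw [h, ← h1]
      · rw [h, Odd.neg_one_pow hNodd] at h1; rw [h, ← h1]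
    have hup : jacobiSym (p:ℤ) u = jacobiSym (u:ℤ) p :=
      jacobiSym.quadratic_reciprocity_one_mod_four hp4 hu_odd
    have huq : jacobiSym (u:ℤ) q = jacobiSym (u:ℤ) p := by
      have hu4 : u % 4 = 1 ∨ u % 4 = 3 := by omega
      rcases hu4 with h4|h4
      · rw [jacobiSym.quadratic_reciprocity_one_mod_four h4 hqodd, hqu,
          ZMod.χ₄_nat_one_mod_four h4, one_mul, hup]
      · rw [jacobiSym.quadratic_reciprocity_three_mod_four h4 hq4, hqu,
          ZMod.χ₄_nat_three_mod_four h4, hup]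
        ring
    have hxcast : (x:ℤ) = 2^s * (u:ℤ) := by exact_mod_cast congrArg (Nat.cast : ℕ → ℤ) hxu
    rw [hxcast, jacobiSym.mul_left, jacobiSym.mul_left, jacobiSym.pow_left,
      jacobiSym.pow_left, huq]
    have h1 : jacobiSym (u:ℤ) p * jacobiSym (u:ℤ) p = 1 := by
      have := jacobiSym.sq_one (a := (u:ℤ)) (b := p)
        (by rw [Int.gcd_natCast_natCast]; exact cup)
      rwa [sq] at this
    calc jacobiSym 2 p ^ s * jacobiSym (u:ℤ) p * (jacobiSym 2 q ^ s * jacobiSym (u:ℤ) p)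
        = (jacobiSym 2 p ^ s * jacobiSym 2 q ^ s) *
          (jacobiSym (u:ℤ) p * jacobiSym (u:ℤ) p) := by ring
      _ = jacobiSym 2 p ^ s * jacobiSym 2 q ^ s := by rw [h1, mul_one]
      _ = (jacobiSym 2 p * jacobiSym 2 q) ^ s := (mul_pow _ _ s).symm
  -- Step 4 : evaluation of J(2|p) * J(2|q) via mod 8 analysis
  have h8 : ((x:ZMod 8))^2 - (p:ZMod 8) * (y:ZMod 8)^2 = (q:ZMod 8)^N := by
    have h := congrArg (Int.cast : ℤ → ZMod 8) heq
    push_cast at h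
    exact h
  have hy8 : ((y:ZMod 8))^2 = 1 := sq8 hyodd'
  have hqsq : ((q:ZMod 8))^2 = 1 := sq8 (Nat.odd_iff.mp hqodd)
  have hqN : ((q:ZMod 8))^N = (q:ZMod 8) := by
    obtain ⟨k, hk⟩ := hNodd
    rw [hk, pow_add, pow_mul, hqsq, one_pow, pow_one, one_mul]
  have hq8 : (q : ZMod 8) = ((x:ZMod 8))^2 - (p:ZMod 8) := by
    rw [← hqN, ← h8, hy8, mul_one]
  have hp8 : ((p:ZMod 8)) = 1 ∨ ((p:ZMod 8)) = 5 := by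
    have h58 : p % 8 = 1 ∨ p % 8 = 5 := by omega
    rw [← ZMod.natCast_mod p 8]
    rcases h58 with h|h <;> rw [h]
    · left; decide
    · right; decide
  have hsign2 : x % 4 = 2 → jacobiSym 2 p * jacobiSym 2 q = -1 := by
    intro hx4
    have hx8 : ((x:ZMod 8))^2 = 4 := by
      have h26 : x % 8 = 2 ∨ x % 8 = 6 := by omega
      rw [← ZMod.natCast_mod x 8]
      rcases h26 with h|h <;> rw [h] <;> decide
    rw [jacobiSym.at_two hpodd, jacobiSym.at_two hqodd]
    rw [hx8] at hq8
    rcases hp8 with h|h <;> rw [h] at hq8 <;> rw [h, hq8] <;> decide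
  have hsign0 : x % 4 = 0 → jacobiSym 2 p * jacobiSym 2 q = 1 := by
    intro hx4
    have hx8 : ((x:ZMod 8))^2 = 0 := by
      have h04 : x % 8 = 0 ∨ x % 8 = 4 := by omega
      rw [← ZMod.natCast_mod x 8]
      rcases h04 with h|h <;> rw [h] <;> decide
    rw [jacobiSym.at_two hpodd, jacobiSym.at_two hqodd]
    rw [hx8] at hq8
    rcases hp8 with h|h <;> rw [h] at hq8 <;> rw [h, hq8] <;> decide
  -- Step 5 : combine
  have fx0 : x % 4 = 0 → b * jacobiSym (x:ℤ) q = 1 := by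
    intro h4
    rw [← hxp, hprod, hsign0 h4, one_pow]
  have fx2 : x % 4 = 2 → b * jacobiSym (x:ℤ) q = -1 := by
    intro h4
    have hseq : s = 1 := by
      rcases Nat.lt_or_ge s 2 with h|h
      · omega
      · exfalso
        have : (4:ℕ) ∣ x := by
          rw [hxu]
          exact Dvd.dvd.mul_right (pow_dvd_pow 2 h) u
        omega
    rw [← hxp, hprod, hseq, pow_one, hsign2 h4]
  have hx4 : x % 4 = 0 ∨ x % 4 = 2 := by omega
  have hy4 : y % 4 = 1 ∨ y % 4 = 3 := by omega
  constructor <;> intro hAB <;>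
    rcases hx4 with h4x|h4x <;> rcases hy4 with h4y|h4y <;>
    [ (have e1 := fx0 h4x; have e2 := hyq1 h4y);
      (have e1 := fx0 h4x; have e2 := hyq3 h4y);
      (have e1 := fx2 h4x; have e2 := hyq1 h4y);
      (have e1 := fx2 h4x; have e2 := hyq3 h4y);
      (have e1 := fx0 h4x; have e2 := hyq1 h4y);
      (have e1 := fx0 h4x; have e2 := hyq3 h4y);
      (have e1 := fx2 h4x; have e2 := hyq1 h4y);
      (have e1 := fx2 h4x; have e2 := hyq3 h4y) ] <;>
    rcases hb with rfl|rfl <;> rw [e2] at hAB <;> omega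
end
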